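/- arXiv:1406.2084 — 2 statements merged into one kernel-verified Lean document; each statement's English description precedes it below -/
import Mathlib

section
/- Let κ be an infinite cardinal and let B be the Boolean algebra of regular open subsets of the product space 2^κ (i.e., open sets equal to the interior of their closure), ordered by inclusion; B is the completion of the free Boolean algebra on κ generators. Then for every ultrafilter U on B, every n < ω, and all cardinals κ_0, …, κ_n each of which is either 1 or an infinite regular cardinal, (U,⊇) is not Tukey reducible to the product (∏_{i≤n} κ_i, ≤) with the coordinatewise order (each κ_i carrying its ordinal order). -/
/-!
Restricting to countably many coordinates is a continuous open map `2^κ → 2^ℕ`, so `U` induces an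
ultrafilter `V` of regular open subsets of the Cantor space that is Tukey below `U`. A finite product
of cardinals that are `1` or infinite regular is a countable union of pieces in which every
countable set is bounded: fix the countable coordinates. As the Cantor space is second countable, a
cofinal map from such a product to `V` yields a countable family in `V` below every member of `V`.
But `V` is not countably generated: its members meet infinitely many levels of a disjoint sequence
of open sets (points first leaving the branch chosen by `V` at a given coordinate), and a regular
open set built from alternate levels splits every member of a countable family.
-/

open Cardinal

/-- A subset `X` of a preorder is cofinal if every element has an upper bound in `X`. -/
def TCofinal {P : Type*} [Preorder P] (X : Set P) : Prop :=
  ∀ p : P, ∃ x ∈ X, p ≤ x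

/-- A map is cofinal if it sends cofinal sets to cofinal sets. -/
def TCofinalMap {P Q : Type*} [Preorder P] [Preorder Q] (f : P → Q) : Prop :=
  ∀ X : Set P, TCofinal X → TCofinal (f '' X)

/-- `P ≤_T Q`: there is a cofinal map from `Q` to `P`. -/
def TukeyLE (P Q : Type*) [Preorder P] [Preorder Q] : Prop :=
  ∃ f : Q → P, TCofinalMap f

/-- Tukey equivalence. -/
def TukeyEquiv (P Q : Type*) [Preorder P] [Preorder Q] : Prop :=
  TukeyLE P Q ∧ TukeyLE Q P

/-- An ultrafilter on the Boolean algebra of regular open subsets of a topological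
space `X` (open sets `s` with `interior (closure s) = s`).  The Boolean operations on
regular opens are: meet = intersection, complement = interior of the set complement,
bottom = `∅`; it is regarded as the partial order `(U,⊇)`. -/
structure ROUltrafilter (X : Type*) [TopologicalSpace X] where
  carrier : Set (Set X)
  regularOpen : ∀ s ∈ carrier, interior (closure s) = s
  empty_not_mem : ∅ ∉ carrier
  inter_mem : ∀ a ∈ carrier, ∀ b ∈ carrier, a ∩ b ∈ carrier
  up_closed : ∀ a ∈ carrier, ∀ b : Set X, interior (closure b) = b → a ⊆ b → b ∈ carrier
  mem_or_compl_mem : ∀ b : Set X, interior (closure b) = b →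
    (b ∈ carrier ∨ interior bᶜ ∈ carrier)

open Set Filter Function OrderDual TopologicalSpace

section Tukey

variable {P Q R : Type*} [Preorder P] [Preorder Q] [Preorder R]

theorem TCofinalMap.exists_forall_le {f : Q → P} (hf : TCofinalMap f) (p : P) :
    ∃ q₀, ∀ q, q₀ ≤ q → p ≤ f q := by
  by_contra! h
  obtain ⟨_, ⟨q, hq, rfl⟩, hpq⟩ :=
    hf {q | ¬p ≤ f q} (fun q₀ ↦ (h q₀).imp fun _ hq ↦ ⟨hq.2, hq.1⟩) p
  exact hq hpq

theorem TukeyLE.trans : TukeyLE P Q → TukeyLE Q R → TukeyLE P R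
  | ⟨g, hg⟩, ⟨f, hf⟩ => ⟨g ∘ f, fun X hX ↦ by rw [image_comp]; exact hg _ (hf X hX)⟩

end Tukey

section CountablyBddAbove

def CountablyBddAbove {Q : Type*} [Preorder Q] (S : Set Q) : Prop :=
  ∀ C ⊆ S, C.Countable → BddAbove C

def SigmaCountablyBddAbove (Q : Type*) [Preorder Q] : Prop :=
  ∃ 𝓢 : Set (Set Q), 𝓢.Countable ∧ ⋃₀ 𝓢 = Set.univ ∧ ∀ S ∈ 𝓢, CountablyBddAbove S

theorem Set.Countable.bddAbove_of_aleph0_lt_cof {α : Type*} [LinearOrder α] {C : Set α}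
    (hC : C.Countable) (hcof : ℵ₀ < Order.cof α) : BddAbove C := by
  by_contra hb
  exact (Order.cof_le (IsCofinal.of_not_bddAbove hb)).trans
    (le_aleph0_iff_set_countable.2 hC) |>.not_gt hcof

theorem Cardinal.countable_or_countablyBddAbove_toType {c : Cardinal} (hc : c ≤ ℵ₀ ∨ c.IsRegular) :
    Countable c.ord.ToType ∨ CountablyBddAbove (Set.univ : Set c.ord.ToType) := by
  by_cases h : c ≤ ℵ₀
  · left
    rwa [← mk_le_aleph0_iff, mk_toType, card_ord]
  · right
    intro C _ hC
    apply hC.bddAbove_of_aleph0_lt_cof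
    rw [Ordinal.cof_toType, (hc.resolve_left h).cof_ord]
    exact not_le.1 h

/-- The pieces are the fibres of the restriction to the countable factors. -/
theorem sigmaCountablyBddAbove_pi {ι : Type*} [Finite ι] {α : ι → Type*} [∀ i, Preorder (α i)]
    (hα : ∀ i, Countable (α i) ∨ CountablyBddAbove (Set.univ : Set (α i))) :
    SigmaCountablyBddAbove (∀ i, α i) := by
  classical
  have : ∀ i : {i // Countable (α i)}, Countable (α i) := fun i ↦ i.2
  let piece (t : ∀ i : {i // Countable (α i)}, α i) : Set (∀ i, α i) := {q | ∀ i, q i.1 = t i}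
  refine ⟨range piece, countable_range _,
    sUnion_eq_univ_iff.2 fun q ↦ ⟨_, ⟨fun i ↦ q i.1, rfl⟩, fun _ ↦ rfl⟩, ?_⟩
  rintro _ ⟨t, rfl⟩ C hC hCc
  have hbdd : ∀ i, ¬Countable (α i) → ∃ b, ∀ q ∈ C, q i ≤ b := fun i hi ↦
    ((hα i).resolve_left hi _ (subset_univ _) (hCc.image _)).imp fun _ hb _ hq ↦
      hb (mem_image_of_mem _ hq)
  choose b hb using hbdd
  refine ⟨fun i ↦ if hi : Countable (α i) then t ⟨i, hi⟩ else b i hi, fun q hq i ↦ ?_⟩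
  dsimp only
  split_ifs with hi
  exacts [(hC hq ⟨i, hi⟩).le, hb i hi q hq]

end CountablyBddAbove

section Topology

variable {X Y : Type*} [TopologicalSpace X] [TopologicalSpace Y]

theorem IsClosed.interior_closure_interior {c : Set X} (hc : IsClosed c) :
    interior (closure (interior c)) = interior c :=
  (interior_mono hc.closure_interior_subset).antisymm isOpen_interior.subset_interior_closure

theorem interior_closure_inter_of_eq {a b : Set X} (ha : interior (closure a) = a)
    (hb : interior (closure b) = b) : interior (closure (a ∩ b)) = a ∩ b := by
  refine subset_antisymm (subset_inter ?_ ?_) ?_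
  · exact (interior_mono (closure_mono inter_subset_left)).trans_eq ha
  · exact (interior_mono (closure_mono inter_subset_right)).trans_eq hb
  · exact ((ha ▸ isOpen_interior).inter (hb ▸ isOpen_interior)).subset_interior_closure

theorem IsOpenMap.preimage_interior_closure {π : X → Y} (ho : IsOpenMap π) (hc : Continuous π)
    (s : Set Y) : π ⁻¹' interior (closure s) = interior (closure (π ⁻¹' s)) := by
  rw [ho.preimage_interior_eq_interior_preimage hc, ho.preimage_closure_eq_closure_preimage hc]

theorem exists_countable_subset_subset_closure [SecondCountableTopology X] (A : Set X) :
    ∃ c ⊆ A, c.Countable ∧ A ⊆ closure c := by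
  obtain ⟨t, htc, htd⟩ := exists_countable_dense A
  refine ⟨(↑) '' t, Subtype.coe_image_subset A t, htc.image _, fun x hx ↦ ?_⟩
  exact image_closure_subset_closure_image continuous_subtype_val
    ⟨⟨x, hx⟩, htd.closure_eq ▸ mem_univ _, rfl⟩

/-- A countable dense subset of `⋃ i ∈ I, (F i)ᶜ` is covered by countably many of the `(F i)ᶜ`. -/
theorem exists_countable_subset_interior_biInter_subset [SecondCountableTopology X] {ι : Type*}
    (F : ι → Set X) (I : Set ι) :
    ∃ J ⊆ I, J.Countable ∧ interior (⋂ i ∈ J, F i) ⊆ ⋂ i ∈ I, F i := by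
  obtain ⟨c, hcA, hcc, hAc⟩ := exists_countable_subset_subset_closure (⋃ i ∈ I, (F i)ᶜ)
  have := hcc.to_subtype
  choose j hjI hj using fun x : c ↦ mem_iUnion₂.1 (hcA x.2)
  refine ⟨range j, range_subset_iff.2 hjI, countable_range j, fun y hy ↦ mem_iInter₂.2 ?_⟩
  have hdisj : Disjoint (interior (⋂ i ∈ range j, F i)) (closure c) := by
    refine Disjoint.closure_right (disjoint_right.2 fun x hx hx' ↦ hj ⟨x, hx⟩ ?_) isOpen_interior
    exact mem_iInter₂.1 (interior_subset hx') _ (mem_range_self _)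
  intro i hi
  by_contra hyi
  exact disjoint_left.1 hdisj hy (hAc (mem_iUnion₂.2 ⟨i, hi, hyi⟩))

theorem isOpenMap_comp_of_injective {ι κ : Type*} {e : κ → ι} (he : Injective e) :
    IsOpenMap fun x : ι → X ↦ x ∘ e := by
  classical
  refine (isTopologicalBasis_pi fun _ ↦ isTopologicalBasis_opens).isOpenMap_iff.2 ?_
  rintro _ ⟨U, s, hU, rfl⟩
  obtain h | ⟨x₀, hx₀⟩ := ((s : Set ι).pi U).eq_empty_or_nonempty
  · simp [h]
  have himage : (· ∘ e) '' (s : Set ι).pi U = (e ⁻¹' s).pi fun n ↦ U (e n) := by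
    refine subset_antisymm (image_subset_iff.2 fun x hx n hn ↦ hx _ hn) fun y hy ↦ ?_
    refine ⟨extend e y x₀, fun i hi ↦ ?_, extend_comp he _ _⟩
    by_cases hie : ∃ n, e n = i
    · obtain ⟨n, rfl⟩ := hie
      rw [he.extend_apply]
      exact hy n hi
    · rw [extend_apply' _ _ _ hie]
      exact hx₀ i hi
  rw [himage]
  exact isOpen_set_pi (s.finite_toSet.preimage he.injOn) fun _ ↦ hU _

theorem exists_mem_ne_of_isOpen {ι : Type*} [Infinite ι] [Nontrivial X] {o : Set (ι → X)}
    (ho : IsOpen o) (hne : o.Nonempty) (t : ι → X) : ∃ y ∈ o, y ≠ t := by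
  classical
  obtain ⟨x, hx⟩ := hne
  by_cases hxt : x = t
  · obtain ⟨I, u, hIu, hsub⟩ := isOpen_pi_iff.1 ho x hx
    obtain ⟨i, hi⟩ := Infinite.exists_notMem_finset I
    obtain ⟨a, ha⟩ := exists_ne (x i)
    refine ⟨update x i a, hsub fun j hj ↦ ?_, fun h ↦ ha (by simpa [hxt] using congr_fun h i)⟩
    rw [update_of_ne (ne_of_mem_of_not_mem hj hi)]
    exact (hIu j hj).2
  · exact ⟨x, hx, hxt⟩

end Topology

namespace ROUltrafilter

variable {X Y : Type*} [TopologicalSpace X] [TopologicalSpace Y]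

theorem isOpen_of_mem (U : ROUltrafilter X) {s : Set X} (hs : s ∈ U.carrier) : IsOpen s :=
  U.regularOpen s hs ▸ isOpen_interior

theorem nonempty_of_mem (U : ROUltrafilter X) {s : Set X} (hs : s ∈ U.carrier) : s.Nonempty :=
  nonempty_iff_ne_empty.2 fun h ↦ U.empty_not_mem (h ▸ hs)

theorem univ_mem (U : ROUltrafilter X) : Set.univ ∈ U.carrier := by
  simpa using (U.mem_or_compl_mem ∅ (by simp)).resolve_left U.empty_not_mem

theorem biInter_finset_mem (U : ROUltrafilter X) {ι : Type*} (I : Finset ι) {s : ι → Set X}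
    (hs : ∀ i ∈ I, s i ∈ U.carrier) : ⋂ i ∈ I, s i ∈ U.carrier := by
  classical
  induction I using Finset.induction_on with
  | empty => simpa using U.univ_mem
  | insert i I _ ih =>
    rw [Finset.set_biInter_insert]
    exact U.inter_mem _ (hs i (Finset.mem_insert_self i I)) _
      (ih fun j hj ↦ hs j (Finset.mem_insert_of_mem hj))

theorem mem_or_compl_mem_of_isClopen (U : ROUltrafilter X) {s : Set X} (hs : IsClopen s) :
    s ∈ U.carrier ∨ sᶜ ∈ U.carrier := by
  simpa only [hs.isClosed.isOpen_compl.interior_eq] using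
    U.mem_or_compl_mem s (by rw [hs.isClosed.closure_eq, hs.isOpen.interior_eq])

def comap (U : ROUltrafilter X) {π : X → Y} (hc : Continuous π) (ho : IsOpenMap π) :
    ROUltrafilter Y where
  carrier := {v | interior (closure v) = v ∧ π ⁻¹' v ∈ U.carrier}
  regularOpen _ h := h.1
  empty_not_mem h := U.empty_not_mem h.2
  inter_mem _ ha _ hb := ⟨interior_closure_inter_of_eq ha.1 hb.1, U.inter_mem _ ha.2 _ hb.2⟩
  up_closed a ha b hb hab := by
    refine ⟨hb, U.up_closed _ ha.2 _ ?_ (preimage_mono hab)⟩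
    rw [← ho.preimage_interior_closure hc, hb]
  mem_or_compl_mem b hb := by
    refine (U.mem_or_compl_mem (π ⁻¹' b) ?_).imp (fun h ↦ ⟨hb, h⟩) fun h ↦ ⟨?_, ?_⟩
    · rw [← ho.preimage_interior_closure hc, hb]
    · exact (hb ▸ isOpen_interior : IsOpen b).isClosed_compl.interior_closure_interior
    · rwa [← preimage_compl, ← ho.preimage_interior_eq_interior_preimage hc] at h

theorem tukeyLE_comap (U : ROUltrafilter X) {π : X → Y} (hc : Continuous π) (ho : IsOpenMap π) :
    TukeyLE (↥(U.comap hc ho).carrier)ᵒᵈ (↥U.carrier)ᵒᵈ := by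
  refine ⟨fun p ↦ toDual ⟨interior (closure (π '' (ofDual p).1)), interior_closure_idem, ?_⟩, ?_⟩
  · refine U.up_closed _ (ofDual p).2 _ ?_ ?_
    · rw [← ho.preimage_interior_closure hc, interior_closure_idem]
    · rw [ho.preimage_interior_closure hc]
      exact (U.isOpen_of_mem (ofDual p).2).subset_interior_closure.trans
        (interior_mono (closure_mono (subset_preimage_image π _)))
  · intro 𝓧 h𝓧 w
    obtain ⟨p, hp, hwp⟩ := h𝓧 (toDual ⟨π ⁻¹' (ofDual w).1, (ofDual w).2.2⟩)
    refine ⟨_, mem_image_of_mem _ hp, ?_⟩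
    show interior (closure (π '' (ofDual p).1)) ⊆ (ofDual w).1
    rw [← (ofDual w).2.1]
    exact interior_mono (closure_mono (image_subset_iff.2 hwp))

def HasCountableBase (U : ROUltrafilter X) : Prop :=
  ∃ 𝓥 ⊆ U.carrier, 𝓥.Countable ∧ ∀ s ∈ U.carrier, ∃ v ∈ 𝓥, v ⊆ s

/-- Each piece `S` of `Q` yields one member of the base: the image under the cofinal map of an upper
bound of the countably many indices that, by second countability, control all `s` with index
in `S`. -/
theorem hasCountableBase_of_tukeyLE [SecondCountableTopology X] {Q : Type*} [Preorder Q]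
    (U : ROUltrafilter X) (hQ : SigmaCountablyBddAbove Q) (hT : TukeyLE (↥U.carrier)ᵒᵈ Q) :
    U.HasCountableBase := by
  obtain ⟨f, hf⟩ := hT
  choose g hg using hf.exists_forall_le
  obtain ⟨𝓢, h𝓢c, h𝓢U, h𝓢b⟩ := hQ
  let F : (↥U.carrier)ᵒᵈ → Set X := fun p ↦ (ofDual p).1
  have hpiece : ∀ S ∈ 𝓢, ∃ u, ∀ p, g p ∈ S → F u ⊆ F p := by
    intro S hS
    obtain ⟨J, hJ, hJc, hJF⟩ := exists_countable_subset_interior_biInter_subset F (g ⁻¹' S)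
    obtain ⟨qb, hqb⟩ := h𝓢b S hS (g '' J) (image_subset_iff.2 hJ) (hJc.image g)
    have hsub : F (f qb) ⊆ ⋂ p ∈ J, F p :=
      subset_iInter₂ fun p hp ↦ hg p qb (hqb (mem_image_of_mem g hp))
    exact ⟨f qb, fun p hp ↦ (interior_maximal hsub (U.isOpen_of_mem (ofDual (f qb)).2)).trans
      hJF |>.trans (biInter_subset_of_mem hp)⟩
  choose u hu using hpiece
  have := h𝓢c.to_subtype
  refine ⟨range fun S : 𝓢 ↦ F (u S.1 S.2), ?_, countable_range _, fun s hs ↦ ?_⟩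
  · rintro _ ⟨S, rfl⟩
    exact (ofDual (u S.1 S.2)).2
  · obtain ⟨S, hS, hgS⟩ := sUnion_eq_univ_iff.1 h𝓢U (g (toDual ⟨s, hs⟩))
    exact ⟨_, ⟨⟨S, hS⟩, rfl⟩, hu S hS _ hgS⟩

/-- Even levels of a sparse subsequence of `W` are put into the regular open set, odd ones are kept
out of it, so that no member of a countable base is below it or its complement. -/
theorem not_hasCountableBase_of_frequently_meets (U : ROUltrafilter X) {W : ℕ → Set X}
    (hWo : ∀ m, IsOpen (W m)) (hWd : Pairwise (Disjoint on W))
    (hW : ∀ s ∈ U.carrier, ∃ᶠ m in atTop, (s ∩ W m).Nonempty) : ¬U.HasCountableBase := by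
  rintro ⟨𝓥, h𝓥U, h𝓥c, h𝓥⟩
  obtain ⟨v₀, hv₀, -⟩ := h𝓥 Set.univ U.univ_mem
  obtain ⟨v, rfl⟩ := h𝓥c.exists_eq_range ⟨v₀, hv₀⟩
  obtain ⟨φ, hφ, hφv⟩ :=
    extraction_forall_of_frequently fun j ↦ hW (v (j / 2)) (h𝓥U (mem_range_self _))
  set A := ⋃ k, W (φ (2 * k))
  have hAo : IsOpen A := isOpen_iUnion fun k ↦ hWo _
  have hin : ∀ k, W (φ (2 * k)) ⊆ interior (closure A) := fun k ↦
    (subset_iUnion (fun k ↦ W (φ (2 * k))) k).trans hAo.subset_interior_closure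
  have hout : ∀ k, Disjoint (W (φ (2 * k + 1))) (interior (closure A)) := fun k ↦
    ((disjoint_iUnion_right.2 fun i ↦ hWd (hφ.injective.ne (by omega))).closure_right
      (hWo _)).mono_right interior_subset
  rcases U.mem_or_compl_mem _ interior_closure_idem with h | h
  · obtain ⟨_, ⟨k, rfl⟩, hk⟩ := h𝓥 _ h
    obtain ⟨y, hyv, hyW⟩ := hφv (2 * k + 1)
    rw [show (2 * k + 1) / 2 = k by omega] at hyv
    exact disjoint_left.1 (hout k) hyW (hk hyv)
  · obtain ⟨_, ⟨k, rfl⟩, hk⟩ := h𝓥 _ h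
    obtain ⟨y, hyv, hyW⟩ := hφv (2 * k)
    rw [show 2 * k / 2 = k by omega] at hyv
    exact interior_subset (hk hyv) (hin k hyW)

theorem exists_setOf_apply_eq_mem {ι : Type*} (U : ROUltrafilter (ι → Bool)) (i : ι) :
    ∃ b, {y : ι → Bool | y i = b} ∈ U.carrier := by
  rcases U.mem_or_compl_mem_of_isClopen
    ((isClopen_discrete {true}).preimage (continuous_apply i)) with h | h
  · exact ⟨true, h⟩
  · refine ⟨false, ?_⟩
    convert h using 1
    ext y
    simp

/-- `W m` is the set of points whose first disagreement with the branch `t` chosen by `U` is at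
`m`. -/
theorem exists_frequently_meets_cantor (U : ROUltrafilter (ℕ → Bool)) :
    ∃ W : ℕ → Set (ℕ → Bool), (∀ m, IsOpen (W m)) ∧ Pairwise (Disjoint on W) ∧
      ∀ s ∈ U.carrier, ∃ᶠ m in atTop, (s ∩ W m).Nonempty := by
  choose t ht using U.exists_setOf_apply_eq_mem
  have hD : ∀ M, {y : ℕ → Bool | ∀ i < M, y i = t i} ∈ U.carrier := fun M ↦ by
    convert U.biInter_finset_mem (Finset.range M) fun i _ ↦ ht i using 1
    ext y
    simp
  refine ⟨fun m ↦ {y | ∀ i < m, y i = t i} ∩ {y | y m ≠ t m},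
    fun m ↦ (U.isOpen_of_mem (hD m)).inter
      (isOpen_ne_fun (continuous_apply m) continuous_const),
    (pairwise_disjoint_on _).2 fun m m' hm ↦ disjoint_left.2 fun y hy hy' ↦ hy.2 (hy'.1 m hm), ?_⟩
  intro s hs
  refine frequently_atTop.2 fun M ↦ ?_
  have hsD := U.inter_mem _ hs _ (hD M)
  obtain ⟨y, ⟨hys, hyD⟩, hyt⟩ :=
    exists_mem_ne_of_isOpen (U.isOpen_of_mem hsD) (U.nonempty_of_mem hsD) t
  have hdev : ∃ i, y i ≠ t i := ne_iff.1 hyt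
  refine ⟨Nat.find hdev, ?_, y, hys, fun i hi ↦ not_not.1 (Nat.find_min hdev hi),
    Nat.find_spec hdev⟩
  by_contra! h
  exact Nat.find_spec hdev (hyD _ h)

theorem not_hasCountableBase_cantor (U : ROUltrafilter (ℕ → Bool)) : ¬U.HasCountableBase :=
  let ⟨_, hWo, hWd, hW⟩ := U.exists_frequently_meets_cantor
  U.not_hasCountableBase_of_frequently_meets hWo hWd hW

end ROUltrafilter

/-- Let `κ` be infinite and let `B` be the algebra of regular open subsets
of `2^κ` (the completion of the free Boolean algebra on `κ` generators).  Then no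
ultrafilter `(U,⊇)` on `B` is Tukey reducible to a finite product `∏_{i≤n} κᵢ` of
cardinals each of which is `1` or an infinite regular cardinal, with the coordinatewise
order (each `κᵢ` carrying its ordinal order). -/
theorem stmt6 (κ : Cardinal) (hκ : ℵ₀ ≤ κ)
    (U : ROUltrafilter (κ.ord.ToType → Bool)) (n : ℕ)
    (κs : Fin (n + 1) → Cardinal)
    (hκs : ∀ i, κs i = 1 ∨ (ℵ₀ ≤ κs i ∧ (κs i).IsRegular)) :
    ¬TukeyLE ((↥U.carrier)ᵒᵈ) ((i : Fin (n + 1)) → (κs i).ord.ToType) := by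
  intro hT
  have : Infinite κ.ord.ToType := by
    rwa [Cardinal.infinite_iff, mk_toType, card_ord]
  let e := Infinite.natEmbedding κ.ord.ToType
  have hc : Continuous fun x : κ.ord.ToType → Bool ↦ x ∘ e :=
    continuous_pi fun m ↦ continuous_apply (e m)
  have ho := isOpenMap_comp_of_injective (X := Bool) e.injective
  have hQ : SigmaCountablyBddAbove ((i : Fin (n + 1)) → (κs i).ord.ToType) :=
    sigmaCountablyBddAbove_pi fun i ↦ countable_or_countablyBddAbove_toType <|
      (hκs i).imp (fun h ↦ h.le.trans one_le_aleph0) And.right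
  exact (U.comap hc ho).not_hasCountableBase_cantor <|
    (U.comap hc ho).hasCountableBase_of_tukeyLE hQ ((U.tukeyLE_comap hc ho).trans hT)
end

section
/- Let P be any set of pairs (κ,μ) of cardinals, each coordinate of each pair being either 1 or an infinite regular cardinal. Then there is a linear order L with a least element such that for every (κ,μ) ∈ P there is an ultrafilter U on Intalg L with (U,⊇) ≡_T (κ×μ,≤), where κ×μ carries the coordinatewise order and each cardinal its ordinal order. -/
/-
Take `L` to be a least element followed by the lexicographic sum, over all pairs of cardinals
`(κ, μ)`, of the blocks `κ + μ*`. Inside the block of `(κ, μ)` there is a cut whose lower side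
has cofinal type `κ` and whose upper side has coinitial type `μ*`. The sets of `Intalg L`
containing an interval `[a, b)` straddling this cut form an ultrafilter `U`, and
`(ξ, η) ↦ [ξ, η*)` is an order embedding of `κ × μ` onto a cofinal subset of `(U, ⊇)`,
hence a Tukey equivalence.
-/

open Cardinal
open scoped Classical

/-- An ultrafilter on a Boolean algebra `B` of subsets of `X` (a field of sets):
a subset of `B` omitting `∅`, closed under intersection, upward closed in `B`, and
containing `s` or `sᶜ` for each `s ∈ B`; regarded as the partial order `(U,⊇)`. -/
structure SetUltrafilter {X : Type*} (B : Set (Set X)) where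
  carrier : Set (Set X)
  subset_alg : carrier ⊆ B
  empty_not_mem : ∅ ∉ carrier
  inter_mem : ∀ a ∈ carrier, ∀ b ∈ carrier, a ∩ b ∈ carrier
  up_closed : ∀ a ∈ carrier, ∀ b ∈ B, a ⊆ b → b ∈ carrier
  mem_or_compl_mem : ∀ b ∈ B, b ∈ carrier ∨ bᶜ ∈ carrier

/-- The Boolean subalgebra of the powerset algebra of `X` generated by a family `G`. -/
def genBoolAlg {X : Type*} (G : Set (Set X)) : Set (Set X) :=
  ⋂₀ {B : Set (Set X) | G ⊆ B ∧ ∅ ∈ B ∧ (∀ s ∈ B, sᶜ ∈ B) ∧ (∀ s ∈ B, ∀ t ∈ B, s ∩ t ∈ B)}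

/-- The interval algebra of a linear order `L`: the subalgebra of the powerset algebra
generated by the half-lines `[a,→)`. -/
def intalg (L : Type*) [LinearOrder L] : Set (Set L) :=
  genBoolAlg {s : Set L | ∃ a : L, s = Set.Ici a}

/-- The cofinality of a subset `C` of a preorder: the least cardinality of a cofinal
subset of `C`. -/
noncomputable def setCof {L : Type*} [Preorder L] (C : Set L) : Cardinal :=
  sInf {c : Cardinal | ∃ D : Set L, D ⊆ C ∧ c = #↥D ∧ ∀ x ∈ C, ∃ y ∈ D, x ≤ y}

/-- The coinitiality of a subset `X` of a preorder: the least cardinality of a coinitial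
subset of `X`, with the convention that the coinitiality of `∅` is `1`. -/
noncomputable def setCoi {L : Type*} [Preorder L] (X : Set L) : Cardinal :=
  if X = ∅ then 1
  else sInf {c : Cardinal | ∃ D : Set L, D ⊆ X ∧ c = #↥D ∧ ∀ x ∈ X, ∃ y ∈ D, y ≤ x}

section IntervalAlgebra

variable {L : Type*} [LinearOrder L]

lemma intalg_subset {B : Set (Set L)} (hIci : ∀ a, Set.Ici a ∈ B) (hempty : ∅ ∈ B)
    (hcompl : ∀ s ∈ B, sᶜ ∈ B) (hinter : ∀ s ∈ B, ∀ t ∈ B, s ∩ t ∈ B) : intalg L ⊆ B :=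
  Set.sInter_subset_of_mem ⟨by rintro _ ⟨a, rfl⟩; exact hIci a, hempty, hcompl, hinter⟩

lemma Ici_mem_intalg (a : L) : Set.Ici a ∈ intalg L :=
  Set.mem_sInter.2 fun _ hB => hB.1 ⟨a, rfl⟩

lemma compl_mem_intalg {s : Set L} (hs : s ∈ intalg L) : sᶜ ∈ intalg L :=
  Set.mem_sInter.2 fun B hB => hB.2.2.1 s (Set.mem_sInter.1 hs B hB)

lemma inter_mem_intalg {s t : Set L} (hs : s ∈ intalg L) (ht : t ∈ intalg L) :
    s ∩ t ∈ intalg L :=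
  Set.mem_sInter.2 fun B hB =>
    hB.2.2.2 s (Set.mem_sInter.1 hs B hB) t (Set.mem_sInter.1 ht B hB)

lemma Ico_mem_intalg (a b : L) : Set.Ico a b ∈ intalg L := by
  rw [← Set.Ici_inter_Iio, ← Set.compl_Ici]
  exact inter_mem_intalg (Ici_mem_intalg a) (compl_mem_intalg (Ici_mem_intalg b))

end IntervalAlgebra

section Cut

variable {L : Type*} [LinearOrder L] {A : Set L}

def cutSets (A : Set L) : Set (Set L) :=
  {s | ∃ a ∈ A, ∃ b ∉ A, Set.Ico a b ⊆ s}

lemma cutSets_mono {s t : Set L} (hs : s ∈ cutSets A) (hst : s ⊆ t) : t ∈ cutSets A :=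
  let ⟨a, ha, b, hb, hab⟩ := hs
  ⟨a, ha, b, hb, hab.trans hst⟩

lemma inter_mem_cutSets {s t : Set L} (hs : s ∈ cutSets A) (ht : t ∈ cutSets A) :
    s ∩ t ∈ cutSets A := by
  obtain ⟨a, ha, b, hb, hab⟩ := hs
  obtain ⟨a', ha', b', hb', hab'⟩ := ht
  refine ⟨max a a', max_rec' (· ∈ A) ha ha', min b b', min_rec' (· ∉ A) hb hb', ?_⟩
  rw [← Set.Ico_inter_Ico]
  exact Set.inter_subset_inter hab hab'

lemma mem_cutSets_or_compl_mem (hA : A.Nonempty) (hAc : Aᶜ.Nonempty) {s : Set L}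
    (hs : s ∈ intalg L) : s ∈ cutSets A ∨ sᶜ ∈ cutSets A := by
  obtain ⟨a₀, ha₀⟩ := hA
  obtain ⟨b₀, hb₀⟩ := hAc
  refine intalg_subset (B := {s | s ∈ cutSets A ∨ sᶜ ∈ cutSets A}) ?_ ?_ ?_ ?_ hs
  · intro c
    by_cases hc : c ∈ A
    · exact Or.inl ⟨c, hc, b₀, hb₀, Set.Ico_subset_Ici_self⟩
    · refine Or.inr ⟨a₀, ha₀, c, hc, ?_⟩
      rw [Set.compl_Ici]
      exact Set.Ico_subset_Iio_self
  · exact Or.inr ⟨a₀, ha₀, b₀, hb₀, by simp⟩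
  · rintro s (hs | hs)
    · exact Or.inr (by rwa [compl_compl])
    · exact Or.inl hs
  · rintro s (hs | hs) t (ht | ht)
    · exact Or.inl (inter_mem_cutSets hs ht)
    · exact Or.inr (cutSets_mono ht (Set.compl_subset_compl.2 Set.inter_subset_right))
    all_goals exact Or.inr (cutSets_mono hs (Set.compl_subset_compl.2 Set.inter_subset_left))

lemma empty_notMem_cutSets (hA : IsLowerSet A) : ∅ ∉ cutSets A := by
  rintro ⟨a, ha, b, hb, hab⟩
  exact hab ⟨le_rfl, lt_of_not_ge fun hba => hb (hA hba ha)⟩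

def cutUltrafilter (hA : IsLowerSet A) (hA₀ : A.Nonempty) (hAc : Aᶜ.Nonempty) :
    SetUltrafilter (intalg L) where
  carrier := intalg L ∩ cutSets A
  subset_alg := Set.inter_subset_left
  empty_not_mem h := empty_notMem_cutSets hA h.2
  inter_mem _ hs _ ht := ⟨inter_mem_intalg hs.1 ht.1, inter_mem_cutSets hs.2 ht.2⟩
  up_closed _ hs _ ht hst := ⟨ht, cutSets_mono hs.2 hst⟩
  mem_or_compl_mem _ hs := (mem_cutSets_or_compl_mem hA₀ hAc hs).imp (⟨hs, ·⟩)
    (⟨compl_mem_intalg hs, ·⟩)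

end Cut

section Tukey

variable {P Q : Type*} [Preorder P] [Preorder Q]

lemma tukeyLE_of_monotone_of_cofinal {g : Q → P} (hg : Monotone g) (hcof : ∀ p, ∃ q, p ≤ g q) :
    TukeyLE P Q := by
  refine ⟨g, fun X hX p => ?_⟩
  obtain ⟨q, hpq⟩ := hcof p
  obtain ⟨x, hxX, hqx⟩ := hX q
  exact ⟨g x, Set.mem_image_of_mem g hxX, hpq.trans (hg hqx)⟩

-- The cofinal map `P → Q` is any choice of `f p` with `p ≤ g (f p)`.
lemma tukeyLE_of_reflect_le_of_cofinal {g : Q → P} (hg : ∀ ⦃x y⦄, g x ≤ g y → x ≤ y)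
    (hcof : ∀ p, ∃ q, p ≤ g q) : TukeyLE Q P := by
  choose f hf using hcof
  refine ⟨f, fun X hX q => ?_⟩
  obtain ⟨x, hxX, hqx⟩ := hX (g q)
  exact ⟨f x, Set.mem_image_of_mem f hxX, hg (hqx.trans (hf x))⟩

lemma tukeyEquiv_of_orderEmbedding (g : Q ↪o P) (hcof : ∀ p, ∃ q, p ≤ g q) :
    TukeyEquiv P Q :=
  ⟨tukeyLE_of_monotone_of_cofinal g.monotone hcof,
    tukeyLE_of_reflect_le_of_cofinal (fun _ _ => g.le_iff_le.1) hcof⟩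

end Tukey

/-- `hcut` says that `range i` is cofinal in, and `range j` coinitial in, the two sides of a
cut of `L`. -/
theorem exists_setUltrafilter_tukeyEquiv_prod {L α β : Type*} [LinearOrder L] [LinearOrder α]
    [LinearOrder β] [Nonempty α] [Nonempty β] {i : α → L} {j : β → L}
    (hi : StrictMono i) (hj : StrictAnti j) (hij : ∀ a b, i a < j b)
    (hcut : ∀ x, (∃ a, x ≤ i a) ∨ ∃ b, j b ≤ x) :
    ∃ U : SetUltrafilter (intalg L), TukeyEquiv (↥U.carrier)ᵒᵈ (α × β) := by
  set A : Set L := {x | ∃ a, x ≤ i a}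
  have hA : IsLowerSet A := fun x y hyx ⟨a, hxa⟩ => ⟨a, hyx.trans hxa⟩
  have hjA : ∀ b, j b ∉ A := fun b ⟨a, hba⟩ => (hij a b).not_ge hba
  let a₀ : α := Classical.arbitrary α
  let b₀ : β := Classical.arbitrary β
  let U := cutUltrafilter hA ⟨i a₀, a₀, le_rfl⟩ ⟨j b₀, hjA b₀⟩
  have hIco_mem : ∀ ab : α × β, Set.Ico (i ab.1) (j ab.2) ∈ U.carrier :=
    fun ab => ⟨Ico_mem_intalg _ _, i ab.1, ⟨ab.1, le_rfl⟩, j ab.2, hjA ab.2, subset_rfl⟩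
  have hIco_subset : ∀ ab ab' : α × β,
      Set.Ico (i ab.1) (j ab.2) ⊆ Set.Ico (i ab'.1) (j ab'.2) ↔ ab' ≤ ab := fun ab ab' => by
    rw [Set.Ico_subset_Ico_iff (hij _ _), hi.le_iff_le, hj.le_iff_ge, Prod.le_def]
  let g : α × β ↪o (↥U.carrier)ᵒᵈ := OrderEmbedding.ofMapLEIff
    (fun ab => OrderDual.toDual ⟨Set.Ico (i ab.1) (j ab.2), hIco_mem ab⟩)
    (fun ab ab' => hIco_subset ab' ab)
  refine ⟨U, tukeyEquiv_of_orderEmbedding g fun s => ?_⟩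
  obtain ⟨-, c, ⟨a, hca⟩, d, hd, hcd⟩ := (OrderDual.ofDual s).2
  obtain ⟨b, hbd⟩ := (hcut d).resolve_left hd
  exact ⟨(a, b), (Set.Ico_subset_Ico hca hbd).trans hcd⟩

section BlockSum

variable {ι : Type*} [LinearOrder ι] {α β : ι → Type*} [∀ k, LinearOrder (α k)]
  [∀ k, LinearOrder (β k)]

lemma sigmaLex_sumLex_le_inl_or_inr_le (k : ι) [Nonempty (α k)] [Nonempty (β k)]
    (x : Σₗ k, α k ⊕ₗ (β k)ᵒᵈ) :
    (∃ a : α k, x ≤ toLex ⟨k, toLex (Sum.inl a)⟩) ∨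
      ∃ b : β k, toLex ⟨k, toLex (Sum.inr (OrderDual.toDual b))⟩ ≤ x := by
  obtain ⟨k', z⟩ := x
  rcases lt_trichotomy k' k with hk | rfl | hk
  · exact Or.inl ⟨Classical.arbitrary _, Sigma.Lex.le_def.2 (Or.inl hk)⟩
  · rcases z with a | b
    · exact Or.inl ⟨a, Sigma.Lex.le_def.2 (Or.inr ⟨rfl, le_rfl⟩)⟩
    · exact Or.inr ⟨OrderDual.ofDual b, Sigma.Lex.le_def.2 (Or.inr ⟨rfl, le_rfl⟩)⟩
  · exact Or.inr ⟨Classical.arbitrary _, Sigma.Lex.le_def.2 (Or.inl hk)⟩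

theorem exists_setUltrafilter_withBot_sigmaLex (k : ι) [Nonempty (α k)] [Nonempty (β k)] :
    ∃ U : SetUltrafilter (intalg (WithBot (Σₗ k, α k ⊕ₗ (β k)ᵒᵈ))),
      TukeyEquiv (↥U.carrier)ᵒᵈ (α k × β k) := by
  refine exists_setUltrafilter_tukeyEquiv_prod
    (i := fun a => ((toLex ⟨k, toLex (Sum.inl a)⟩ : Σₗ k, α k ⊕ₗ (β k)ᵒᵈ) : WithBot _))
    (j := fun b => ((toLex ⟨k, toLex (Sum.inr (OrderDual.toDual b))⟩ : Σₗ k, α k ⊕ₗ (β k)ᵒᵈ) :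
      WithBot _))
    ?_ ?_ ?_ ?_
  · intro a a' h
    exact WithBot.coe_lt_coe.2 (Sigma.Lex.lt_def.2 (Or.inr ⟨rfl, Sum.Lex.inl_lt_inl_iff.2 h⟩))
  · intro b b' h
    exact WithBot.coe_lt_coe.2 (Sigma.Lex.lt_def.2 (Or.inr ⟨rfl, Sum.Lex.inr_lt_inr_iff.2 h⟩))
  · intro a b
    exact WithBot.coe_lt_coe.2 (Sigma.Lex.lt_def.2 (Or.inr ⟨rfl, Sum.Lex.inl_lt_inr _ _⟩))
  · intro x
    induction x using WithBot.recBotCoe with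
    | bot => exact Or.inl ⟨Classical.arbitrary _, bot_le⟩
    | coe y =>
      exact (sigmaLex_sumLex_le_inl_or_inr_le k y).imp
        (fun ⟨a, h⟩ => ⟨a, WithBot.coe_le_coe.2 h⟩) (fun ⟨b, h⟩ => ⟨b, WithBot.coe_le_coe.2 h⟩)

end BlockSum

lemma nonempty_toType_ord_of_eq_one_or_isRegular {c : Cardinal}
    (hc : c = 1 ∨ (ℵ₀ ≤ c ∧ c.IsRegular)) : Nonempty c.ord.ToType := by
  rw [Ordinal.nonempty_toType_iff, Ne, Cardinal.ord_eq_zero]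
  rcases hc with rfl | hc
  · exact one_ne_zero
  · exact hc.2.pos.ne'

universe u

/-- For any set `P` of pairs of cardinals, each coordinate being `1` or an
infinite regular cardinal, there is a linear order `L` with a least element such that
for every `(κ,μ) ∈ P` some ultrafilter `U` on `Intalg L` satisfies
`(U,⊇) ≡_T (κ×μ,≤)` (coordinatewise order, each cardinal with its ordinal order). -/
theorem stmt10 (P : Set (Cardinal.{u} × Cardinal.{u}))
    (hP : ∀ p ∈ P, (p.1 = 1 ∨ (ℵ₀ ≤ p.1 ∧ p.1.IsRegular)) ∧
      (p.2 = 1 ∨ (ℵ₀ ≤ p.2 ∧ p.2.IsRegular))) :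
    ∃ (L : Type (u + 1)) (inst : LinearOrder L),
      letI := inst
      (∃ bot : L, ∀ x : L, bot ≤ x) ∧
        ∀ p ∈ P, ∃ U : SetUltrafilter (intalg L),
          TukeyEquiv ((↥U.carrier)ᵒᵈ) (p.1.ord.ToType × p.2.ord.ToType) := by
  refine ⟨WithBot (Σₗ p : Cardinal.{u} ×ₗ Cardinal.{u},
    (ofLex p).1.ord.ToType ⊕ₗ ((ofLex p).2.ord.ToType)ᵒᵈ), inferInstance, ⟨⊥, fun _ => bot_le⟩,
    fun p hp => ?_⟩
  have : Nonempty (ofLex (toLex p)).1.ord.ToType :=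
    nonempty_toType_ord_of_eq_one_or_isRegular (hP p hp).1
  have : Nonempty (ofLex (toLex p)).2.ord.ToType :=
    nonempty_toType_ord_of_eq_one_or_isRegular (hP p hp).2
  exact exists_setUltrafilter_withBot_sigmaLex (α := fun p => (ofLex p).1.ord.ToType)
    (β := fun p => (ofLex p).2.ord.ToType) (toLex p)
end
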